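/- Let (μ_λ)_{λ∈Λ} be a measurable family of Borel regular outer measures on ℝ^n and suppose 𝓘^m_p is finite for some p ∈ (1,∞]. Let (η_x)_{x∈ℝ^n} be a family of Radon measures on Λ disintegrating 𝓘̂_m over π_{1♯}𝓘̂_m, i.e. x ↦ η_x(U) is Borel for every Borel U ⊂ Λ and 𝓘̂_m(A) = ∫_{ℝ^n} η_x(A_x) d(π_{1♯}𝓘̂_m)(x) for every Borel A ⊂ ℝ^n × Λ, where π_1 : ℝ^n × Λ → ℝ^n is the projection and A_x := {λ : (x,λ) ∈ A}. Then η_x ≪ L^l for π_{1♯}𝓘̂_m-a.e. x ∈ ℝ^n. -/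

import Mathlib

open MeasureTheory Metric Set Filter
open scoped ENNReal NNReal Topology

noncomputable section

abbrev Euc (n : ℕ) : Type := EuclideanSpace ℝ (Fin n)

namespace Slicing

variable {n m l : ℕ}

/-- The map `T_{x x'}(λ) = (P_λ(x) - P_λ(x'))/|x - x'|`. -/
def transMap (P : Euc n → Euc l → Euc m) (x x' : Euc n) (lam : Euc l) : Euc m :=
  ‖x - x'‖⁻¹ • (P x lam - P x' lam)

/-- The `m`-dimensional Jacobian `J D = √det(D ∘ Dᵀ)` of a linear map `D : ℝˡ → ℝᵐ`. -/
def jacobian (D : Euc l →L[ℝ] Euc m) : ℝ :=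
  Real.sqrt (LinearMap.det
    ((D.comp (ContinuousLinearMap.adjoint D) : Euc m →L[ℝ] Euc m) : Euc m →ₗ[ℝ] Euc m))

/-- A transversal family of maps `(P_λ)_{λ ∈ Λ}` in the sense of Definition 3.4. -/
structure IsTransversalFamily (Λ : Set (Euc l)) (P : Euc n → Euc l → Euc m) : Prop where
  isOpen : IsOpen Λ
  isBounded : Bornology.IsBounded Λ
  continuousOn : ContinuousOn (fun q : Euc n × Euc l => P q.1 q.2) (Set.univ ×ˢ Λ)
  contDiffOn : ∀ x : Euc n, ContDiffOn ℝ 2 (P x) Λ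
  derivBound : ∀ j : ℕ, j = 1 ∨ j = 2 → ∃ C : ℝ, ∀ x : Euc n, ∀ lam ∈ Λ,
    ‖iteratedFDeriv ℝ j (P x) lam‖ ≤ C
  transversality : ∃ C' : ℝ, 0 < C' ∧ ∀ x x' : Euc n, x ≠ x' → ∀ lam ∈ Λ,
    ‖transMap P x x' lam‖ ≤ C' → C' ≤ jacobian (fderiv ℝ (transMap P x x') lam)
  transDerivBound : ∃ C'' : ℝ, ∀ x x' : Euc n, x ≠ x' → ∀ lam ∈ Λ,
    ‖fderiv ℝ (transMap P x x') lam‖ ≤ C'' ∧ ‖iteratedFDeriv ℝ 2 (transMap P x x') lam‖ ≤ C''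

/-- The cone `X(a,λ,s)`. -/
def coneX (P : Euc n → Euc l → Euc m) (a : Euc n) (lam : Euc l) (s : ℝ) : Set (Euc n) :=
  {x | ‖P x lam - P a lam‖ < s * ‖x - a‖}

/-- The truncated cone `X(a,r,λ,s)`. -/
def coneXr (P : Euc n → Euc l → Euc m) (a : Euc n) (r : ℝ) (lam : Euc l) (s : ℝ) :
    Set (Euc n) :=
  coneX P a lam s ∩ closedBall a r

/-- The cone `L_V(a,λ,s)`. -/
def coneL (P : Euc n → Euc l → Euc m) (V : Submodule ℝ (Euc l)) (a : Euc n) (lam : Euc l)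
    (s : ℝ) : Set (Euc n) :=
  {x | ∃ lam' : Euc l, P x lam' = P a lam' ∧ ‖lam' - lam‖ < s ∧ lam' - lam ∈ V}

/-- `V` is an `m`-dimensional coordinate plane of `ℝˡ`. -/
def IsCoordPlane (m : ℕ) (V : Submodule ℝ (Euc l)) : Prop :=
  ∃ I : Finset (Fin l), I.card = m ∧
    V = Submodule.span ℝ {v : Euc l | ∃ i ∈ I, v = EuclideanSpace.single i (1 : ℝ)}

/-- A countably `m`-rectifiable subset of `ℝⁿ`. -/
def CountablyRectifiable (m : ℕ) (R : Set (Euc n)) : Prop :=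
  ∃ (E : ℕ → Set (Euc m)) (f : ℕ → Euc m → Euc n),
    (∀ i, Bornology.IsBounded (E i)) ∧
    (∀ i, ∃ K : ℝ≥0, LipschitzOnWith K (f i) (E i)) ∧
    R = ⋃ i, f i '' E i

/-- An `m`-rectifiable measure: `μ = θ · (H^m ⌊ R)`. -/
def IsRectifiableMeasure (m : ℕ) (μ : Measure (Euc n)) : Prop :=
  ∃ (R : Set (Euc n)) (θ : Euc n → ℝ), CountablyRectifiable m R ∧ Measurable θ ∧
    μ = (μH[(m : ℝ)].restrict R).withDensity (fun x => ENNReal.ofReal (θ x))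

/-- `S` is an `m`-dimensional `C¹` submanifold of `ℝⁿ`. -/
def IsC1Submanifold (m : ℕ) (S : Set (Euc n)) : Prop :=
  ∀ x ∈ S, ∃ (U : Set (Euc n)) (V : Set (Euc m)) (f : Euc m → Euc n),
    IsOpen U ∧ x ∈ U ∧ IsOpen V ∧ ContDiffOn ℝ 1 f V ∧ Set.InjOn f V ∧
    (∀ y ∈ V, Function.Injective (fderivWithin ℝ f V y)) ∧ S ∩ U = f '' V

/-- `E` is purely `(φ,m)`-unrectifiable. -/
def PurelyUnrectifiable (m : ℕ) (φ : Measure (Euc n)) (E : Set (Euc n)) : Prop :=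
  ∀ S : Set (Euc n), IsC1Submanifold m S → φ (S ∩ E) = 0

/-- `A` is countably `(φ,m)`-rectifiable. -/
def CountablyRectifiableWrt (m : ℕ) (φ : Measure (Euc n)) (A : Set (Euc n)) : Prop :=
  ∃ R : Set (Euc n), CountablyRectifiable m R ∧ φ (A \ R) = 0

/-- Carathéodory's construction from a set function `ζ`, using countable Borel coverings. -/
def carath {X : Type*} [EMetricSpace X] [MeasurableSpace X] (ζ : Set X → ℝ≥0∞) (E : Set X) :
    ℝ≥0∞ :=
  ⨆ (δ : ℝ≥0∞) (_ : 0 < δ), ⨅ (G : ℕ → Set X) (_ : ∀ i, MeasurableSet (G i))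
    (_ : E ⊆ ⋃ i, G i) (_ : ∀ i, EMetric.diam (G i) ≤ δ), ∑' i, ζ (G i)

/-- `L^p` norm of an `ℝ≥0∞`-valued function. -/
def lpNormENN {α : Type*} [MeasurableSpace α] (ν : Measure α) (p : ℝ≥0∞) (f : α → ℝ≥0∞) :
    ℝ≥0∞ :=
  if p = ∞ then essSup f ν else (∫⁻ a, f a ^ p.toReal ∂ν) ^ (1 / p.toReal)

/-- The set function `ζ_p(B) = ‖λ ↦ μ_λ(B)‖_{L^p(Λ)}`. -/
def zetaP (Λ : Set (Euc l)) (μ : Euc l → Measure (Euc n)) (p : ℝ≥0∞) (B : Set (Euc n)) :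
    ℝ≥0∞ :=
  lpNormENN (volume.restrict Λ) p (fun lam => μ lam B)

/-- The measure `𝓘^m_p` obtained from `ζ_p` via Carathéodory's construction. -/
def genIGMeasure (Λ : Set (Euc l)) (μ : Euc l → Measure (Euc n)) (p : ℝ≥0∞) :
    Set (Euc n) → ℝ≥0∞ :=
  carath (zetaP Λ μ p)

/-- Upper Lebesgue integral. -/
def upperLintegral {α : Type*} [MeasurableSpace α] (ν : Measure α) (f : α → ℝ≥0∞) : ℝ≥0∞ :=
  ⨅ (g : α → ℝ≥0∞) (_ : Measurable g) (_ : ∀ a, f a ≤ g a), ∫⁻ a, g a ∂ν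

/-- The set function `ζ̂(B') = ∫*_Λ μ_λ(B'_λ) dλ`. -/
def zetaHat (Λ : Set (Euc l)) (μ : Euc l → Measure (Euc n)) (B' : Set (Euc n × Euc l)) :
    ℝ≥0∞ :=
  upperLintegral (volume.restrict Λ) (fun lam => μ lam {x | (x, lam) ∈ B'})

/-- The measure `𝓘̂_m` on the product, obtained from `ζ̂` via Carathéodory's construction. -/
def hatIG (Λ : Set (Euc l)) (μ : Euc l → Measure (Euc n)) : Set (Euc n × Euc l) → ℝ≥0∞ :=
  carath (zetaHat Λ μ)

/-- A measurable family of (Borel regular outer) measures. -/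
def MeasurableFamily (Λ : Set (Euc l)) (μ : Euc l → Measure (Euc n)) : Prop :=
  ∀ B : Set (Euc n), MeasurableSet B → AEMeasurable (fun lam => μ lam B) (volume.restrict Λ)

/-- `𝓘^m_p` is an integralgeometric measure (Definition 4.1). -/
def IsIntegralgeometric (Λ : Set (Euc l)) (P : Euc n → Euc l → Euc m)
    (μ : Euc l → Measure (Euc n)) : Prop :=
  (∀ᵐ lam ∂(volume.restrict Λ), (μ lam).map (fun x => P x lam) ≪ volume) ∧
  ∃ E : Set (Euc n), MeasurableSet E ∧
    (∀ᵐ lam ∂(volume.restrict Λ), μ lam Eᶜ = 0) ∧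
    (∀ᵐ lam ∂(volume.restrict Λ), ∀ᵐ y ∂((μ lam).map (fun x => P x lam)),
      (E ∩ (fun x => P x lam) ⁻¹' {y}).Finite)

/-- A disintegration `ν = η_y ⊗ Q_♯ν`. -/
def IsDisintegration {X Y : Type*} [MeasurableSpace X] [MeasurableSpace Y] (ν : Measure X)
    (Q : X → Y) (η : Y → Measure X) : Prop :=
  (∀ y, IsProbabilityMeasure (η y)) ∧
  (∀ᵐ y ∂(ν.map Q), η y (Q ⁻¹' {y})ᶜ = 0) ∧
  (∀ B : Set X, MeasurableSet B → Measurable fun y => η y B) ∧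
  (∀ B : Set X, MeasurableSet B → ν B = ∫⁻ y, η y B ∂(ν.map Q))

/-- A `0`-rectifiable measure (a countable sum of nonnegative point masses). -/
def ZeroRectifiable {X : Type*} [MeasurableSpace X] (ν : Measure X) : Prop :=
  ∃ R : Set X, R.Countable ∧ ν Rᶜ = 0

/-- A measure supported on a finite set. -/
def FinitelySupported {X : Type*} [MeasurableSpace X] (ν : Measure X) : Prop :=
  ∃ F : Set X, F.Finite ∧ ν Fᶜ = 0

/-- `ω(m)`, the Lebesgue measure of the unit ball of `ℝᵐ`. -/
def omegaBall (m : ℕ) : ℝ := (volume (Metric.ball (0 : Euc m) 1)).toReal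

/-- The `m`-dimensional upper density `Θ^{*m}(ν, a)`. -/
def upperDensity (m : ℕ) (ν : Measure (Euc n)) (a : Euc n) : ℝ≥0∞ :=
  Filter.limsup
    (fun r : ℝ => ν (closedBall a r) / ENNReal.ofReal (omegaBall m * r ^ m)) (𝓝[>] 0)

/-- `sup_{0<r<δ} (rs)^{-m} φ(E ∩ X(a,r,λ,s))`, then `limsup` as `s → 0⁺`. -/
def coneDensity (P : Euc n → Euc l → Euc m) (φ : Measure (Euc n)) (E : Set (Euc n))
    (a : Euc n) (lam : Euc l) (δ : ℝ) : ℝ≥0∞ :=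
  Filter.limsup (fun s : ℝ =>
    ⨆ (r : ℝ) (_ : r ∈ Set.Ioo (0 : ℝ) δ),
      φ (E ∩ coneXr P a r lam s) / ENNReal.ofReal ((r * s) ^ m)) (𝓝[>] 0)



/-- The Grassmannian of `m`-dimensional linear subspaces of `ℝⁿ`. -/
def Grassmannian (n m : ℕ) : Type :=
  {V : Submodule ℝ (Euc n) // Module.finrank ℝ V = m}

/-- The orthogonal projection `π_V : ℝⁿ → V ⊆ ℝⁿ`. -/
def projG {n m : ℕ} (V : Grassmannian n m) : Euc n →L[ℝ] Euc n :=
  (V.1.subtypeL).comp (Submodule.orthogonalProjectionOnto V.1)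

instance {n m : ℕ} : TopologicalSpace (Grassmannian n m) :=
  TopologicalSpace.induced projG inferInstance

instance {n m : ℕ} : MeasurableSpace (Grassmannian n m) := borel _

instance {n m : ℕ} : BorelSpace (Grassmannian n m) := ⟨rfl⟩

/-- The action of an orthogonal transformation on the Grassmannian. -/
def grMap {n m : ℕ} (g : Euc n ≃ₗᵢ[ℝ] Euc n) (V : Grassmannian n m) : Grassmannian n m :=
  ⟨V.1.map (g.toLinearEquiv : Euc n →ₗ[ℝ] Euc n), by
    rw [LinearEquiv.finrank_map_eq g.toLinearEquiv V.1]; exact V.2⟩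

/-- A measure on the Grassmannian is invariant under the action of `O(n)`. -/
def IsONInvariant {n m : ℕ} (γ : Measure (Grassmannian n m)) : Prop :=
  ∀ g : Euc n ≃ₗᵢ[ℝ] Euc n, Measure.map (grMap g) γ = γ

/-- `η_p(B) = ‖V ↦ H^m(π_V(B))‖_{L^p(γ)}`. -/
def etaP {n m : ℕ} (γ : Measure (Grassmannian n m)) (p : ℝ≥0∞) (B : Set (Euc n)) : ℝ≥0∞ :=
  lpNormENN γ p (fun V => μH[(m : ℝ)] (projG V '' B))

/-- Federer's integralgeometric measure `I^m_p`. -/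
def IGMeasure {n m : ℕ} (γ : Measure (Grassmannian n m)) (p : ℝ≥0∞) :
    Set (Euc n) → ℝ≥0∞ :=
  carath (etaP γ p)

/-- `μ_V(B) = ∫_V H^0(B ∩ π_V⁻¹(y)) dH^m(y)`. -/
def muV {n m : ℕ} (V : Grassmannian n m) (B : Set (Euc n)) : ℝ≥0∞ :=
  ∫⁻ y in (V.1 : Set (Euc n)), Measure.count (B ∩ projG V ⁻¹' {y}) ∂μH[(m : ℝ)]



/-- `ζ_p(B) = ‖V ↦ μ_V(B)‖_{L^p(γ)}` for the measures `μ_V`. -/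
def zetaGr {n m : ℕ} (γ : Measure (Grassmannian n m)) (p : ℝ≥0∞) (B : Set (Euc n)) : ℝ≥0∞ :=
  lpNormENN γ p (fun V => muV V B)

/-- The measure `𝓘^m_p` obtained from `ζ_p` via Carathéodory's construction. -/
def IGMeasureAlt {n m : ℕ} (γ : Measure (Grassmannian n m)) (p : ℝ≥0∞) :
    Set (Euc n) → ℝ≥0∞ :=
  carath (zetaGr γ p)

/-!
By Hölder's inequality in `λ`, `𝓘̂_m(C × V) ≤ 𝓘^m_p(C) · |V ∩ Λ|^{1/q}` with `1/q = 1 - 1/p > 0`.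
Since `𝓘^m_p` is a metric outer measure it restricts to a finite Borel measure `φ`, and the
disintegration turns the estimate into `∫_C η_x(V) dν ≤ φ(C) · |V|^{1/q}`.
If `η_x` charges a Lebesgue null set by more than `θ`, then (outer regularity, and inner
approximation of open sets by finite unions of basic balls) for every `ε` one of countably many
sets `V_k` with `|V_k| ≤ ε` has `η_x(V_k) > θ`. Sorting such `x` into disjoint Borel sets `D_k`
according to the first such `k` gives `θ · ν(⋃ D_k) ≤ ∑ φ(D_k) ε^{1/q} ≤ φ(ℝⁿ) ε^{1/q}`, which
tends to `0` with `ε`.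
-/

lemma ediam_prod_le {X Y : Type*} [EMetricSpace X] [EMetricSpace Y] {s : Set X} {t : Set Y}
    {δ : ℝ≥0∞} (hs : ediam s ≤ δ) (ht : ediam t ≤ δ) : ediam (s ×ˢ t) ≤ δ :=
  ediam_le fun x hx y hy => by
    rw [Prod.edist_eq]
    exact max_le (edist_le_of_ediam_le hx.1 hy.1 hs) (edist_le_of_ediam_le hx.2 hy.2 ht)

section Caratheodory

variable {X : Type*} [EMetricSpace X] [MeasurableSpace X] {ζ : Set X → ℝ≥0∞}

/-- With this gauge, Mathlib's `mkMetric'`, built from arbitrary covers, agrees with `carath`,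
built from Borel covers. -/
def measurableGauge (ζ : Set X → ℝ≥0∞) (s : Set X) : ℝ≥0∞ := ⨅ _ : MeasurableSet s, ζ s

/-- The size-`δ` approximation of Carathéodory's construction `carath ζ`. -/
def carathPre (ζ : Set X → ℝ≥0∞) (δ : ℝ≥0∞) : OuterMeasure X :=
  OuterMeasure.mkMetric'.pre (measurableGauge ζ) δ

lemma carath_eq_iSup_carathPre (hζ : ζ ∅ = 0) (E : Set X) :
    carath ζ E = ⨆ δ > 0, carathPre ζ δ E := by
  change (⨆ (δ : ℝ≥0∞) (_ : 0 < δ), ⨅ (G : ℕ → Set X) (_ : ∀ i, MeasurableSet (G i))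
    (_ : E ⊆ ⋃ i, G i) (_ : ∀ i, ediam (G i) ≤ δ), ∑' i, ζ (G i)) = _
  simp only [carathPre, OuterMeasure.mkMetric'.pre, OuterMeasure.boundedBy_apply, extend,
    measurableGauge]
  refine iSup_congr fun δ => iSup_congr fun _ => iInf_congr fun G => ?_
  by_cases hG : (∀ i, MeasurableSet (G i)) ∧ ∀ i, ediam (G i) ≤ δ
  · have hterm : ∀ i, (⨆ _ : (G i).Nonempty, ⨅ (_ : ediam (G i) ≤ δ) (_ : MeasurableSet (G i)),
        ζ (G i)) = ζ (G i) := by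
      intro i
      rcases (G i).eq_empty_or_nonempty with h | h
      · simp [h, hζ]
      · simp [h, hG.1 i, hG.2 i]
    simp_rw [hterm]
    simp only [hG.1, hG.2, iInf_pos, forall_const]
  · have hbad : ∃ i, (G i).Nonempty ∧ ¬ (MeasurableSet (G i) ∧ ediam (G i) ≤ δ) := by
      by_contra! h
      refine hG ⟨fun i => ?_, fun i => ?_⟩ <;> rcases (G i).eq_empty_or_nonempty with he | he
      · simp [he]
      · exact (h i he).1
      · simp [he]
      · exact (h i he).2
    obtain ⟨i, hne, hi⟩ := hbad
    have htop : ∑' j, (⨆ _ : (G j).Nonempty, ⨅ (_ : ediam (G j) ≤ δ) (_ : MeasurableSet (G j)),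
        ζ (G j)) = ∞ := by
      refine ENNReal.tsum_eq_top_of_eq_top ⟨i, ?_⟩
      by_cases hm : MeasurableSet (G i) <;> simp_all
    rw [htop, iInf_top, eq_top_iff]
    exact le_iInf fun hm => le_iInf fun _ => le_iInf fun hd => absurd ⟨hm, hd⟩ hG

lemma carath_eq_mkMetric' (hζ : ζ ∅ = 0) :
    carath ζ = OuterMeasure.mkMetric' (measurableGauge ζ) := by
  ext E
  simp only [carath_eq_iSup_carathPre hζ, carathPre, OuterMeasure.mkMetric',
    OuterMeasure.iSup_apply]

lemma mkMetric'_measurableGauge_apply [BorelSpace X] (hζ : ζ ∅ = 0) {s : Set X}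
    (hs : MeasurableSet s) : Measure.mkMetric' (measurableGauge ζ) s = carath ζ s := by
  rw [Measure.mkMetric', toMeasure_apply _ _ hs, carath_eq_mkMetric' hζ]

lemma exists_measurableSet_partition_ediam_le [TopologicalSpace.SeparableSpace X]
    [OpensMeasurableSpace X] [Nonempty X] {δ : ℝ≥0∞} (hδ : 0 < δ) :
    ∃ P : ℕ → Set X, (∀ j, MeasurableSet (P j)) ∧ Pairwise (Function.onFun Disjoint P) ∧
      ⋃ j, P j = univ ∧ ∀ j, ediam (P j) ≤ δ := by
  set x := TopologicalSpace.denseSeq X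
  set B : ℕ → Set X := fun j => eball (x j) (δ / 2)
  have hcover : ⋃ j, B j = univ := by
    refine eq_univ_of_forall fun y => mem_iUnion.2 ?_
    obtain ⟨j, hj⟩ := (TopologicalSpace.denseRange_denseSeq X).exists_mem_open
      isOpen_eball ⟨y, mem_eball_self (ENNReal.half_pos hδ.ne')⟩
    exact ⟨j, mem_eball_comm.1 hj⟩
  refine ⟨disjointed B, .disjointed fun j => isOpen_eball.measurableSet,
    disjoint_disjointed B, by rw [iUnion_disjointed, hcover], fun j => ?_⟩
  calc ediam (disjointed B j) ≤ ediam (B j) := ediam_mono (disjointed_subset B j)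
    _ ≤ 2 * (δ / 2) := ediam_eball_le
    _ = δ := ENNReal.mul_div_cancel two_ne_zero ENNReal.ofNat_ne_top

lemma carathPre_le {δ : ℝ≥0∞} {s : Set X} (hs : MeasurableSet s) (hsδ : ediam s ≤ δ) :
    carathPre ζ δ s ≤ ζ s :=
  (OuterMeasure.mkMetric'.pre_le hsδ).trans (iInf_le _ hs)

lemma le_smul_carathPre [TopologicalSpace.SeparableSpace X] [OpensMeasurableSpace X]
    [Nonempty X] {χ : OuterMeasure X} {c δ : ℝ≥0∞} (hc : c ≠ ∞) (hδ : 0 < δ)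
    (h : ∀ s, MeasurableSet s → ediam s ≤ δ → χ s ≤ c * ζ s) :
    χ ≤ c • carathPre ζ δ := by
  rw [carathPre, OuterMeasure.mkMetric'.pre, OuterMeasure.smul_boundedBy hc,
    OuterMeasure.le_boundedBy]
  intro s
  simp only [Pi.smul_apply, extend, measurableGauge, smul_eq_mul]
  by_cases hs : MeasurableSet s ∧ ediam s ≤ δ
  · simpa [hs.1, hs.2] using h s hs.1 hs.2
  by_cases hc0 : c = 0
  · obtain ⟨P, hPm, -, hPU, hPd⟩ := exists_measurableSet_partition_ediam_le (X := X) hδ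
    calc χ s ≤ χ (⋃ j, P j) := measure_mono (hPU ▸ subset_univ s)
      _ ≤ ∑' j, χ (P j) := measure_iUnion_le P
      _ ≤ ∑' j, c * ζ (P j) := ENNReal.tsum_le_tsum fun j => h _ (hPm j) (hPd j)
      _ = _ := by simp [hc0]
  have htop : (⨅ (_ : ediam s ≤ δ) (_ : MeasurableSet s), ζ s) = ∞ :=
    iInf_eq_top.2 fun hd => iInf_eq_top.2 fun hm => absurd ⟨hm, hd⟩ hs
  rw [htop, ENNReal.mul_top hc0]
  exact le_top

end Caratheodory

section Lebesgue

variable {α : Type*} [MeasurableSpace α] {ν : Measure α} {f : α → ℝ≥0∞}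

lemma lpNormENN_eq_eLpNorm {p : ℝ≥0∞} (hp : p ≠ 0) : lpNormENN ν p f = eLpNorm f p ν := by
  by_cases hptop : p = ∞
  · simp [lpNormENN, hptop, eLpNorm_exponent_top, eLpNormEssSup]
  · simp [lpNormENN, hptop, eLpNorm_eq_lintegral_rpow_enorm_toReal hp hptop]

lemma one_sub_toReal_inv_nonneg {p : ℝ≥0∞} (hp : 1 ≤ p) : 0 ≤ 1 - p.toReal⁻¹ := by
  rw [sub_nonneg, ← ENNReal.toReal_inv]
  exact ENNReal.toReal_le_of_le_ofReal zero_le_one (by simpa using ENNReal.inv_le_one.2 hp)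

lemma one_sub_toReal_inv_pos {p : ℝ≥0∞} (hp : 1 < p) : 0 < 1 - p.toReal⁻¹ := by
  rw [sub_pos, ← ENNReal.toReal_inv]
  exact ENNReal.toReal_lt_of_lt_ofReal (by simpa using ENNReal.inv_lt_one.2 hp)

/-- Hölder's inequality against the indicator of `s`; the exponent `1 - p⁻¹ = 1/q` is `1` for
`p = ∞` because `∞.toReal = 0`. -/
lemma setLIntegral_le_lpNormENN_mul_rpow {p : ℝ≥0∞} (hp : 1 ≤ p) (hf : AEMeasurable f ν)
    (s : Set α) : ∫⁻ a in s, f a ∂ν ≤ lpNormENN ν p f * ν s ^ (1 - p.toReal⁻¹) := by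
  rw [lpNormENN_eq_eLpNorm (one_pos.trans_le hp).ne']
  calc ∫⁻ a in s, f a ∂ν = eLpNorm f 1 (ν.restrict s) := by
        simp [eLpNorm_one_eq_lintegral_enorm]
    _ ≤ eLpNorm f p (ν.restrict s) * ν.restrict s univ ^ (1 / (1 : ℝ≥0∞).toReal - 1 / p.toReal) :=
        eLpNorm_le_eLpNorm_mul_rpow_measure_univ hp hf.aestronglyMeasurable.restrict
    _ ≤ eLpNorm f p ν * ν s ^ (1 - p.toReal⁻¹) := by
        rw [Measure.restrict_apply_univ]
        simp only [ENNReal.toReal_one, div_one, one_div]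
        gcongr
        exact Measure.restrict_le_self

lemma upperLintegral_le_lintegral (hf : AEMeasurable f ν) :
    upperLintegral ν f ≤ ∫⁻ a, f a ∂ν := by
  classical
  set N := toMeasurable ν {a | f a ≠ hf.mk f a}
  have hN : ν N = 0 := by rw [measure_toMeasurable]; exact hf.ae_eq_mk
  have hfg : ∀ a, f a ≤ N.piecewise (fun _ => ∞) (hf.mk f) a := by
    intro a
    by_cases ha : a ∈ N
    · simp [ha]
    · have : f a = hf.mk f a := not_not.1 fun h => ha (subset_toMeasurable _ _ h)
      simp [ha, this]
  refine iInf₂_le_of_le _ (measurable_const.piecewise (measurableSet_toMeasurable _ _)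
    hf.measurable_mk) (iInf_le_of_le hfg (le_of_eq ?_))
  refine lintegral_congr_ae ?_
  filter_upwards [hf.ae_eq_mk, measure_eq_zero_iff_ae_notMem.1 hN] with a ha haN
  rw [Set.piecewise_eq_of_notMem _ _ _ haN, ha]

end Lebesgue

section IntegralGeometric

variable {Λ : Set (Euc l)} {μ : Euc l → Measure (Euc n)} {p : ℝ≥0∞}

lemma zetaP_empty (hp : p ≠ 0) : zetaP Λ μ p ∅ = 0 := by
  simp [zetaP, lpNormENN_eq_eLpNorm hp]

lemma zetaHat_empty : zetaHat Λ μ ∅ = 0 := by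
  have h := upperLintegral_le_lintegral (ν := volume.restrict Λ) (f := fun _ => 0)
    aemeasurable_const
  simpa [zetaHat] using h

lemma zetaHat_prod_le (hμ : MeasurableFamily Λ μ) {B : Set (Euc n)} (hB : MeasurableSet B)
    {W : Set (Euc l)} (hW : MeasurableSet W) :
    zetaHat Λ μ (B ×ˢ W) ≤ ∫⁻ lam in W, μ lam B ∂(volume.restrict Λ) := by
  have hslice : (fun lam => μ lam {x | (x, lam) ∈ B ×ˢ W}) = W.indicator fun lam => μ lam B := by
    ext lam
    by_cases hlam : lam ∈ W <;> simp [hlam]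
  rw [zetaHat, hslice, ← lintegral_indicator hW]
  exact upperLintegral_le_lintegral ((hμ B hB).indicator hW)

lemma carathPre_zetaHat_prod_le (hμ : MeasurableFamily Λ μ) (hp : 1 ≤ p) {δ : ℝ≥0∞} (hδ : 0 < δ)
    {B : Set (Euc n)} (hB : MeasurableSet B) (hBδ : ediam B ≤ δ) {V : Set (Euc l)}
    (hV : MeasurableSet V) :
    carathPre (zetaHat Λ μ) δ (B ×ˢ V) ≤
      volume.restrict Λ V ^ (1 - p.toReal⁻¹) * zetaP Λ μ p B := by
  obtain ⟨P, hPm, hPd, hPU, hPδ⟩ := exists_measurableSet_partition_ediam_le (X := Euc l) hδ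
  have hV_eq : V = ⋃ j, P j ∩ V := by rw [← iUnion_inter, hPU, univ_inter]
  calc carathPre (zetaHat Λ μ) δ (B ×ˢ V)
      ≤ ∑' j, carathPre (zetaHat Λ μ) δ (B ×ˢ (P j ∩ V)) := by
        conv_lhs => rw [hV_eq, prod_iUnion]
        exact measure_iUnion_le _
    _ ≤ ∑' j, zetaHat Λ μ (B ×ˢ (P j ∩ V)) := by
        refine ENNReal.tsum_le_tsum fun j => ?_
        exact carathPre_le (hB.prod ((hPm j).inter hV))
          (ediam_prod_le hBδ ((ediam_mono inter_subset_left).trans (hPδ j)))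
    _ ≤ ∑' j, ∫⁻ lam in P j ∩ V, μ lam B ∂(volume.restrict Λ) :=
        ENNReal.tsum_le_tsum fun j => zetaHat_prod_le hμ hB ((hPm j).inter hV)
    _ = ∫⁻ lam in V, μ lam B ∂(volume.restrict Λ) := by
        rw [← lintegral_iUnion (fun j => (hPm j).inter hV)
          (fun i j hij => (hPd hij).mono inter_subset_left inter_subset_left), ← hV_eq]
    _ ≤ zetaP Λ μ p B * volume.restrict Λ V ^ (1 - p.toReal⁻¹) :=
        setLIntegral_le_lpNormENN_mul_rpow hp (hμ B hB) V
    _ = _ := mul_comm _ _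

lemma hatIG_prod_le (hμ : MeasurableFamily Λ μ) (hp : 1 ≤ p) {V : Set (Euc l)}
    (hV : MeasurableSet V) (hVfin : volume.restrict Λ V ≠ ∞) (C : Set (Euc n)) :
    hatIG Λ μ (C ×ˢ V) ≤ genIGMeasure Λ μ p C * volume.restrict Λ V ^ (1 - p.toReal⁻¹) := by
  set c := volume.restrict Λ V ^ (1 - p.toReal⁻¹)
  have hc : c ≠ ∞ := ENNReal.rpow_ne_top_of_nonneg (one_sub_toReal_inv_nonneg hp) hVfin
  rw [hatIG, genIGMeasure, carath_eq_iSup_carathPre zetaHat_empty,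
    carath_eq_iSup_carathPre (zetaP_empty (one_pos.trans_le hp).ne'), mul_comm]
  refine iSup₂_le fun δ hδ => ?_
  set χ := OuterMeasure.map Prod.fst
    (OuterMeasure.restrict (univ ×ˢ V) (carathPre (zetaHat Λ μ) δ))
  have hχ : ∀ s, χ s = carathPre (zetaHat Λ μ) δ (s ×ˢ V) := by
    intro s
    simp [χ, Set.prod_eq]
  calc carathPre (zetaHat Λ μ) δ (C ×ˢ V) = χ C := (hχ C).symm
    _ ≤ c * carathPre (zetaP Λ μ p) δ C :=
        le_smul_carathPre hc hδ (fun s hs hsδ =>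
          (hχ s).trans_le (carathPre_zetaHat_prod_le hμ hp hδ hs hsδ hV)) C
    _ ≤ c * ⨆ δ > 0, carathPre (zetaP Λ μ p) δ C := by
        gcongr
        exact le_iSup₂ (f := fun δ (_ : 0 < δ) =>
          carathPre (zetaP Λ μ p) δ C) δ hδ

end IntegralGeometric

section AbsolutelyContinuous

variable {X Y : Type*} [MeasurableSpace X] [MeasurableSpace Y]

lemma exists_seq_approx_isOpen [TopologicalSpace Y] [SecondCountableTopology Y]
    [OpensMeasurableSpace Y] :
    ∃ V : ℕ → Set Y, (∀ m, MeasurableSet (V m)) ∧ ∀ (τ : Measure Y) (U : Set Y), IsOpen U →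
      ∀ θ < τ U, ∃ m, V m ⊆ U ∧ θ < τ (V m) := by
  set b := TopologicalSpace.countableBasis Y
  set 𝒱 : Set (Set Y) := sUnion '' {F | F.Finite ∧ F ⊆ b}
  have h𝒱c : 𝒱.Countable :=
    (countable_ofPred_finite_subset (TopologicalSpace.countable_countableBasis Y)).image _
  have h𝒱o : ∀ W ∈ 𝒱, IsOpen W := by
    rintro _ ⟨F, ⟨-, hFb⟩, rfl⟩
    exact isOpen_sUnion fun s hs => TopologicalSpace.isOpen_of_mem_countableBasis (hFb hs)
  obtain ⟨V, hV⟩ := h𝒱c.exists_eq_range ⟨∅, ∅, ⟨finite_empty, empty_subset _⟩, sUnion_empty⟩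
  refine ⟨V, fun m => (h𝒱o _ (hV ▸ mem_range_self m)).measurableSet, fun τ U hU θ hθ => ?_⟩
  set T := {W ∈ 𝒱 | W ⊆ U}
  have hdir : Directed (· ⊆ ·) (fun W : T => (W : Set Y)) := by
    rintro ⟨_, ⟨F, hF, rfl⟩, hFU⟩ ⟨_, ⟨G, hG, rfl⟩, hGU⟩
    refine ⟨⟨⋃₀ (F ∪ G), ⟨F ∪ G, ⟨hF.1.union hG.1, union_subset hF.2 hG.2⟩, rfl⟩, ?_⟩, ?_, ?_⟩
    · rw [sUnion_union]; exact union_subset hFU hGU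
    · exact sUnion_mono subset_union_left
    · exact sUnion_mono subset_union_right
  have hTU : ⋃ W : T, (W : Set Y) = U := by
    refine (iUnion_subset fun W => W.2.2).antisymm fun y hy => ?_
    obtain ⟨s, hsb, hys, hsU⟩ :=
      (TopologicalSpace.isBasis_countableBasis Y).exists_subset_of_mem_open hy hU
    exact mem_iUnion.2 ⟨⟨s, ⟨{s}, ⟨finite_singleton s, singleton_subset_iff.2 hsb⟩,
      sUnion_singleton s⟩, hsU⟩, hys⟩
  have : Countable T := (h𝒱c.mono (sep_subset _ _)).to_subtype
  rw [← hTU, hdir.measure_iUnion] at hθ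
  obtain ⟨⟨W, hW𝒱, hWU⟩, hθW⟩ := lt_iSup_iff.1 hθ
  obtain ⟨m, rfl⟩ : W ∈ range V := hV ▸ hW𝒱
  exact ⟨m, hWU, hθW⟩

lemma setLIntegral_eq_lintegral_prod_slice {ν : Measure X} {η : X → Measure Y} {C : Set X}
    (hC : MeasurableSet C) (V : Set Y) :
    ∫⁻ x in C, η x V ∂ν = ∫⁻ x, η x {y | (x, y) ∈ C ×ˢ V} ∂ν := by
  rw [← lintegral_indicator hC]
  congr with x
  by_cases hx : x ∈ C <;> simp [hx]

def smallSetMass (ρ : Measure Y) (V : ℕ → Set Y) (ε : ℝ≥0∞) (τ : Measure Y) : ℝ≥0∞ :=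
  ⨆ m, ⨆ (_ : ρ (V m) ≤ ε), τ (V m)

variable {ν φ : Measure X} {η : X → Measure Y} {ρ : Measure Y} {r : ℝ} {V : ℕ → Set Y}

lemma exists_forall_lt_smallSetMass_of_not_absolutelyContinuous [TopologicalSpace Y]
    [ρ.OuterRegular] (hV : ∀ (τ : Measure Y) (U : Set Y), IsOpen U → ∀ θ < τ U,
      ∃ m, V m ⊆ U ∧ θ < τ (V m))
    {τ : Measure Y} (hτ : ¬ τ ≪ ρ) : ∃ k : ℕ, ∀ ε, 0 < ε → (k : ℝ≥0∞)⁻¹ < smallSetMass ρ V ε τ := by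
  obtain ⟨N, hρN, hτN⟩ : ∃ N, ρ N = 0 ∧ τ N ≠ 0 := by
    simpa [Measure.AbsolutelyContinuous] using hτ
  obtain ⟨k, hk⟩ := ENNReal.exists_inv_nat_lt hτN
  refine ⟨k, fun ε hε => ?_⟩
  obtain ⟨U, hNU, hU, hρU⟩ := N.exists_isOpen_lt_of_lt ε (hρN ▸ hε)
  obtain ⟨m, hmU, hkm⟩ := hV τ U hU _ (hk.trans_le (measure_mono hNU))
  exact hkm.trans_le (le_iSup₂_of_le m ((measure_mono hmU).trans hρU.le) le_rfl)

lemma mul_measure_lt_smallSetMass_le (hr : 0 ≤ r)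
    (hη : ∀ V, MeasurableSet V → Measurable fun x => η x V)
    (hbound : ∀ C V, MeasurableSet C → MeasurableSet V → ρ V ≠ ∞ →
      ∫⁻ x in C, η x V ∂ν ≤ φ C * ρ V ^ r)
    (hV : ∀ m, MeasurableSet (V m)) {ε : ℝ≥0∞} (hε : ε ≠ ∞) (θ : ℝ≥0∞) :
    θ * ν {x | θ < smallSetMass ρ V ε (η x)} ≤ φ univ * ε ^ r := by
  set S : ℕ → Set X := fun m => {x | ρ (V m) ≤ ε ∧ θ < η x (V m)}
  have hSm : ∀ m, MeasurableSet (S m) := fun m =>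
    (MeasurableSet.const _).inter (measurableSet_lt measurable_const (hη _ (hV m)))
  have hK : {x | θ < smallSetMass ρ V ε (η x)} = ⋃ m, disjointed S m := by
    ext x
    simp [S, smallSetMass, iUnion_disjointed, lt_iSup_iff]
  have hD : ∀ m, θ * ν (disjointed S m) ≤ φ (disjointed S m) * ε ^ r := by
    intro m
    by_cases hm : ρ (V m) ≤ ε
    · calc θ * ν (disjointed S m) = ∫⁻ _ in disjointed S m, θ ∂ν := (setLIntegral_const _ _).symm
        _ ≤ ∫⁻ x in disjointed S m, η x (V m) ∂ν :=
            setLIntegral_mono (hη _ (hV m)) fun x hx => (disjointed_subset S m hx).2.le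
        _ ≤ φ (disjointed S m) * ρ (V m) ^ r :=
            hbound _ _ (.disjointed hSm m) (hV m) (ne_top_of_le_ne_top hε hm)
        _ ≤ φ (disjointed S m) * ε ^ r := by gcongr
    · have : disjointed S m = ∅ :=
        eq_empty_of_subset_empty fun x hx => hm (disjointed_subset S m hx).1
      simp [this]
  calc θ * ν {x | θ < smallSetMass ρ V ε (η x)}
      = ∑' m, θ * ν (disjointed S m) := by
        rw [hK, measure_iUnion (disjoint_disjointed S) (.disjointed hSm), ENNReal.tsum_mul_left]
    _ ≤ ∑' m, φ (disjointed S m) * ε ^ r := ENNReal.tsum_le_tsum hD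
    _ = φ (⋃ m, disjointed S m) * ε ^ r := by
        rw [ENNReal.tsum_mul_right, measure_iUnion (disjoint_disjointed S) (.disjointed hSm)]
    _ ≤ φ univ * ε ^ r := by gcongr; exact subset_univ _

lemma measure_forall_lt_smallSetMass_eq_zero [IsFiniteMeasure φ] (hr : 0 < r)
    (hη : ∀ V, MeasurableSet V → Measurable fun x => η x V)
    (hbound : ∀ C V, MeasurableSet C → MeasurableSet V → ρ V ≠ ∞ →
      ∫⁻ x in C, η x V ∂ν ≤ φ C * ρ V ^ r)
    (hV : ∀ m, MeasurableSet (V m)) {θ : ℝ≥0∞} (hθ : θ ≠ 0) :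
    ν {x | ∀ ε, 0 < ε → θ < smallSetMass ρ V ε (η x)} = 0 := by
  have hlim : Tendsto (fun k : ℕ => φ univ * ((k : ℝ≥0∞)⁻¹) ^ r) atTop (𝓝 0) := by
    have hpow := ((ENNReal.continuous_rpow_const (y := r)).tendsto 0).comp
      ENNReal.tendsto_inv_nat_nhds_zero
    simpa [ENNReal.zero_rpow_of_pos hr] using
      ENNReal.Tendsto.const_mul hpow (Or.inr (measure_ne_top φ univ))
  have hle : θ * ν {x | ∀ ε, 0 < ε → θ < smallSetMass ρ V ε (η x)} ≤ 0 := by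
    refine ge_of_tendsto hlim (eventually_atTop.2 ⟨1, fun k hk => ?_⟩)
    have hk0 : (k : ℝ≥0∞) ≠ 0 := by exact_mod_cast (Nat.one_le_iff_ne_zero.1 hk)
    calc θ * ν {x | ∀ ε, 0 < ε → θ < smallSetMass ρ V ε (η x)}
        ≤ θ * ν {x | θ < smallSetMass ρ V (k : ℝ≥0∞)⁻¹ (η x)} := by
          gcongr
          exact fun h => h _ (ENNReal.inv_pos.2 (ENNReal.natCast_ne_top k))
      _ ≤ φ univ * ((k : ℝ≥0∞)⁻¹) ^ r :=
          mul_measure_lt_smallSetMass_le hr.le hη hbound hV (ENNReal.inv_ne_top.2 hk0) θ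
  simpa [hθ] using hle

theorem ae_absolutelyContinuous_of_setLIntegral_le [TopologicalSpace Y]
    [SecondCountableTopology Y] [OpensMeasurableSpace Y] [IsFiniteMeasure φ] [ρ.OuterRegular]
    (hr : 0 < r) (hη : ∀ V, MeasurableSet V → Measurable fun x => η x V)
    (hbound : ∀ C V, MeasurableSet C → MeasurableSet V → ρ V ≠ ∞ →
      ∫⁻ x in C, η x V ∂ν ≤ φ C * ρ V ^ r) :
    ∀ᵐ x ∂ν, η x ≪ ρ := by
  obtain ⟨V, hVm, hVapprox⟩ := exists_seq_approx_isOpen (Y := Y)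
  have hbad : {x | ¬ η x ≪ ρ} ⊆
      ⋃ k : ℕ, {x | ∀ ε, 0 < ε → (k : ℝ≥0∞)⁻¹ < smallSetMass ρ V ε (η x)} := fun x hx =>
    mem_iUnion.2 (exists_forall_lt_smallSetMass_of_not_absolutelyContinuous hVapprox hx)
  exact ae_iff.2 <| measure_mono_null hbad <| measure_iUnion_null fun k =>
    measure_forall_lt_smallSetMass_eq_zero hr hη hbound hVm
      (ENNReal.inv_ne_zero.2 (ENNReal.natCast_ne_top k))

end AbsolutelyContinuous

theorem disintegration_absolutely_continuous_general
    {n l : ℕ}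
    (Λ : Set (Euc l))
    (μ : Euc l → Measure (Euc n)) (hμ : MeasurableFamily Λ μ)
    (p : ℝ≥0∞) (hp : 1 < p) (hfin : genIGMeasure Λ μ p Set.univ < ∞)
    (ν : Measure (Euc n))
    (η : Euc n → Measure (Euc l))
    (hηmeas : ∀ U : Set (Euc l), MeasurableSet U → Measurable fun x => η x U)
    (hdis : ∀ A : Set (Euc n × Euc l), MeasurableSet A →
      hatIG Λ μ A = ∫⁻ x, η x {lam | (x, lam) ∈ A} ∂ν) :
    ∀ᵐ x ∂ν, η x ≪ volume := by
  have hζ : zetaP Λ μ p ∅ = 0 := zetaP_empty (one_pos.trans hp).ne'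
  set φ := Measure.mkMetric' (measurableGauge (zetaP Λ μ p))
  have : IsFiniteMeasure φ := ⟨by rwa [mkMetric'_measurableGauge_apply hζ MeasurableSet.univ]⟩
  refine ae_absolutelyContinuous_of_setLIntegral_le (φ := φ) (one_sub_toReal_inv_pos hp) hηmeas
    fun C V hC hV hVfin => ?_
  calc ∫⁻ x in C, η x V ∂ν = hatIG Λ μ (C ×ˢ V) := by
        rw [hdis _ (hC.prod hV), setLIntegral_eq_lintegral_prod_slice hC]
    _ ≤ genIGMeasure Λ μ p C * volume.restrict Λ V ^ (1 - p.toReal⁻¹) :=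
        hatIG_prod_le hμ hp.le hV (ne_top_of_le_ne_top hVfin (Measure.restrict_apply_le _ _)) C
    _ ≤ φ C * volume V ^ (1 - p.toReal⁻¹) := by
        rw [mkMetric'_measurableGauge_apply hζ hC, genIGMeasure]
        gcongr
        · exact one_sub_toReal_inv_nonneg hp.le
        · exact Measure.restrict_le_self

/-- Proposition 4.7: if `𝓘^m_p` is finite for some `p > 1`, then
any disintegration `(η_x)` of `𝓘̂_m` over `π_{1♯}𝓘̂_m` satisfies `η_x ≪ L^l` for
`π_{1♯}𝓘̂_m`-a.e. `x`. -/
theorem disintegration_absolutely_continuous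
    {n l : ℕ} (hn : 1 ≤ n)
    (Λ : Set (Euc l)) (hΛo : IsOpen Λ) (hΛb : Bornology.IsBounded Λ)
    (μ : Euc l → Measure (Euc n)) (hμ : MeasurableFamily Λ μ)
    (p : ℝ≥0∞) (hp : 1 < p) (hfin : genIGMeasure Λ μ p Set.univ < ∞)
    (ν : Measure (Euc n))
    (hν : ∀ E : Set (Euc n), MeasurableSet E →
      ν E = hatIG Λ μ (E ×ˢ (Set.univ : Set (Euc l))))
    (η : Euc n → Measure (Euc l)) (hηfin : ∀ x, IsFiniteMeasure (η x))
    (hηΛ : ∀ x, η x Λᶜ = 0)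
    (hηmeas : ∀ U : Set (Euc l), MeasurableSet U → Measurable fun x => η x U)
    (hdis : ∀ A : Set (Euc n × Euc l), MeasurableSet A →
      hatIG Λ μ A = ∫⁻ x, η x {lam | (x, lam) ∈ A} ∂ν) :
    ∀ᵐ x ∂ν, η x ≪ volume :=
  disintegration_absolutely_continuous_general Λ μ hμ p hp hfin ν η hηmeas hdis

end Slicing
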